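/- The inverse of a nonsingular bdsw matrix is a full matrix, i.e., every entry of the inverse is nonzero. -/

import Mathlib

open Matrix Finset
/-- A *bi-diagonal south-west* (bdsw) matrix: the diagonal, the super diagonal and the
south-west corner entry are nonzero, and all other entries are zero. -/
def Bdsw {n : ℕ} (B : Matrix (Fin (n + 2)) (Fin (n + 2)) ℝ) : Prop :=
  (∀ i, B i i ≠ 0) ∧
  (∀ i j : Fin (n + 2), (j : ℕ) = (i : ℕ) + 1 → B i j ≠ 0) ∧
  (B (Fin.last (n + 1)) 0 ≠ 0) ∧
  (∀ i j : Fin (n + 2), i ≠ j → (j : ℕ) ≠ (i : ℕ) + 1 →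
    ¬(i = Fin.last (n + 1) ∧ j = 0) → B i j = 0)

/-!
In column `j` of `X = A⁻¹`, row `k` of `A * X = 1` reads
`A k k * X k j + A k (k + 1) * X (k + 1) j = δ k j` with indices mod `n + 2`. For `k ≠ j` the two
terms cancel with nonzero coefficients, so `X k j` and `X (k + 1) j` vanish together. Walking once
around the cycle from `j + 1` to `j`, either the whole column vanishes, contradicting row `j`, or no
entry does.
-/

section
open Fin.NatCast Fin.CommRing

theorem Fin.forall_of_cyclic_step {m : ℕ} [NeZero m] {p : Fin m → Prop} (j : Fin m)
    (hstart : p (j + 1)) (hstep : ∀ k, k ≠ j → p k → p (k + 1)) : ∀ k, p k := by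
  have walk : ∀ s : ℕ, s < m → p (j + 1 + s) := by
    intro s
    induction s with
    | zero => exact fun _ => by simpa using hstart
    | succ s ih =>
      intro hs
      have hne : j + 1 + (s : Fin m) ≠ j := by
        intro h
        have hdvd : m ∣ s + 1 := by
          rw [← Fin.natCast_eq_zero]
          push_cast
          linear_combination h
        exact absurd (Nat.le_of_dvd s.succ_pos hdvd) (by omega)
      simpa [add_assoc] using hstep _ hne (ih (by omega))
  intro k
  simpa using walk (k - (j + 1)).val (k - (j + 1)).isLt

end

theorem ne_zero_of_cyclic_recurrence {K : Type*} [Ring K] [NoZeroDivisors K] {m : ℕ}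
    [NeZero m] {a b x : Fin m → K} (ha : ∀ k, a k ≠ 0) (hb : ∀ k, b k ≠ 0) (j : Fin m)
    (hrow : ∀ k, k ≠ j → a k * x k + b k * x (k + 1) = 0)
    (hj : a j * x j + b j * x (j + 1) ≠ 0) : ∀ k, x k ≠ 0 := by
  have hstart : x (j + 1) ≠ 0 := by
    intro h0
    have hzero : ∀ k, x k = 0 := Fin.forall_of_cyclic_step j h0 fun k hk hxk => by
      simpa [hxk, hb k] using hrow k hk
    exact hj (by simp [hzero])
  refine Fin.forall_of_cyclic_step j hstart fun k hk hxk hxk1 => ?_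
  simpa [hxk1, ha k, hxk] using hrow k hk

/-- `i + 1` wraps around: the south-west corner is the superdiagonal entry of the last row. -/
def Matrix.IsCyclicBidiagonal {K : Type*} [Zero K] {n : ℕ}
    (A : Matrix (Fin (n + 2)) (Fin (n + 2)) K) : Prop :=
  (∀ i, A i i ≠ 0) ∧ (∀ i, A i (i + 1) ≠ 0) ∧ ∀ i k, k ≠ i → k ≠ i + 1 → A i k = 0

namespace Matrix.IsCyclicBidiagonal

variable {K : Type*} {n : ℕ}

theorem mul_apply [NonUnitalNonAssocSemiring K] {A : Matrix (Fin (n + 2)) (Fin (n + 2)) K}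
    (hA : A.IsCyclicBidiagonal) (X : Matrix (Fin (n + 2)) (Fin (n + 2)) K) (i j : Fin (n + 2)) :
    (A * X) i j = A i i * X i j + A i (i + 1) * X (i + 1) j := by
  rw [Matrix.mul_apply]
  refine Fintype.sum_eq_add _ _ (by simp) fun k hk => ?_
  rw [hA.2.2 i k hk.1 hk.2, zero_mul]

theorem inv_apply_ne_zero [CommRing K] [IsDomain K] {A : Matrix (Fin (n + 2)) (Fin (n + 2)) K}
    (hA : A.IsCyclicBidiagonal) (hdet : IsUnit A.det) (i j : Fin (n + 2)) : A⁻¹ i j ≠ 0 := by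
  have hrow (k : Fin (n + 2)) :
      A k k * A⁻¹ k j + A k (k + 1) * A⁻¹ (k + 1) j = if k = j then 1 else 0 := by
    rw [← hA.mul_apply, Matrix.mul_nonsing_inv A hdet, Matrix.one_apply]
  exact ne_zero_of_cyclic_recurrence (x := fun k => A⁻¹ k j) hA.1 hA.2.1 j
    (fun k hk => by simp [hrow, hk]) (by simp [hrow]) i

end Matrix.IsCyclicBidiagonal

theorem Bdsw.isCyclicBidiagonal {n : ℕ} {A : Matrix (Fin (n + 2)) (Fin (n + 2)) ℝ}
    (hA : Bdsw A) : A.IsCyclicBidiagonal := by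
  obtain ⟨hdiag, hsuper, hcorner, hzero⟩ := hA
  refine ⟨hdiag, fun i => ?_, fun i k hki hk => ?_⟩
  · by_cases hi : i = Fin.last (n + 1)
    · simpa [hi] using hcorner
    · exact hsuper i _ (by simp [Fin.val_add_one, hi])
  · refine hzero i k (Ne.symm hki) (fun hval => hk (Fin.ext ?_)) fun ⟨hi, hk0⟩ => hk ?_
    · have hi : i ≠ Fin.last (n + 1) := by
        rintro rfl
        simp only [Fin.val_last] at hval
        omega
      simp [Fin.val_add_one, hi, hval]
    · rw [hi, hk0, Fin.last_add_one]

theorem stmt4 {n : ℕ} (A : Matrix (Fin (n + 2)) (Fin (n + 2)) ℝ) (hA : Bdsw A)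
    (hdet : A.det ≠ 0) : ∀ i j, A⁻¹ i j ≠ 0 :=
  hA.isCyclicBidiagonal.inv_apply_ne_zero hdet.isUnit
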